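/- Let v_1,...,v_m ∈ ℤⁿ be a spanning configuration that is not 2-regular: there exists a maximal linearly independent subset {v_{i_1},...,v_{i_n}} such that ℤⁿ/⟨v_{i_1},...,v_{i_n}⟩ is not 2-torsion. Then for every integer q ≥ 2 there exists a ∈ (1/q)ℤⁿ such that for every x ∈ ℤⁿ there is some j with |⟨a + x, v_j⟩| ≥ 1. -/

import Mathlib

/-!
Let `A` be the integer matrix with rows `v (s k)` and `M = A ℤⁿ` its column lattice. If `M`
contained `2 eᵢ` for every `i`, then `A C = 2` for an integer matrix `C`, hence `C A = 2` and the
row lattice would contain `2 ℤⁿ`. So some `eᵢ` has order `e ≥ 3` in the finite group `ℤⁿ / M`;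
pick `A xₑ = e eᵢ` and `t = ⌊q / 2⌋`. Then `a = (t / q) xₑ` works: if `A (a + x) = (t e / q) eᵢ + A x`
lay in the open unit cube, the integer vector `A x` would be `w eᵢ` with `e ∣ w`, while
`|t e / q + w| ≥ e · dist (t / q, ℤ) ≥ 3 · 1/3`.
-/

open Matrix

namespace Matrix

variable {ι R : Type*} [Fintype ι] [DecidableEq ι] [CommRing R]

theorem mul_eq_smul_one_comm [IsDomain R] {A C : Matrix ι ι R} (hA : A.det ≠ 0) {c : R}
    (h : A * C = c • 1) : C * A = c • 1 := by
  have key : A.det • (C * A) = A.det • (c • 1 : Matrix ι ι R) := by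
    calc A.det • (C * A) = adjugate A * (A * C) * A := by
          rw [← Matrix.mul_assoc, adjugate_mul, smul_mul, Matrix.one_mul, smul_mul]
      _ = A.det • (c • 1 : Matrix ι ι R) := by
          rw [h, Matrix.mul_smul, Matrix.mul_one, smul_mul, adjugate_mul, smul_comm]
  exact smul_right_injective _ hA key

theorem single_det_mem_range_mulVecLin (A : Matrix ι ι R) (i : ι) :
    Pi.single i A.det ∈ LinearMap.range A.mulVecLin :=
  ⟨adjugate A *ᵥ Pi.single i 1, by
    rw [mulVecLin_apply, mulVec_mulVec, mul_adjugate, smul_mulVec, one_mulVec,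
      ← Pi.single_smul, smul_eq_mul, mul_one]⟩

theorem smul_mem_span_row_of_forall_single_mem_range [IsDomain R] {A : Matrix ι ι R}
    (hA : A.det ≠ 0) {c : R} (h : ∀ i, Pi.single i c ∈ LinearMap.range A.mulVecLin)
    (z : ι → R) : c • z ∈ Submodule.span R (Set.range A.row) := by
  choose C hC using h
  have hAC : A * (of C)ᵀ = c • 1 := by
    ext j i
    simpa [mul_apply, mulVec, dotProduct, Pi.single_apply, one_apply, eq_comm]
      using congrFun (hC i) j
  rw [← range_vecMulLinear]
  exact ⟨z ᵥ* (of C)ᵀ, by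
    rw [vecMulLinear_apply, vecMul_vecMul, mul_eq_smul_one_comm hA hAC, vecMul_smul, vecMul_one]⟩

theorem det_ne_zero_of_linearIndependent_row_map {K : Type*} [Field K] [CharZero K]
    {A : Matrix ι ι ℤ} (h : LinearIndependent K (A.map (Int.cast : ℤ → K)).row) :
    A.det ≠ 0 := by
  have := ((linearIndependent_rows_iff_isUnit.mp h).map detMonoidHom).ne_zero
  rw [coe_detMonoidHom, ← Int.cast_det] at this
  exact_mod_cast this

end Matrix

theorem exists_three_le_forall_single_mem_iff {ι : Type*} [DecidableEq ι]
    (M : Submodule ℤ (ι → ℤ)) (i : ι) {d : ℤ} (hd : d ≠ 0) (hdM : Pi.single i d ∈ M)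
    (h2 : Pi.single i 2 ∉ M) : ∃ e : ℕ, 3 ≤ e ∧ ∀ w : ℤ, Pi.single i w ∈ M ↔ (e : ℤ) ∣ w := by
  set g : (ι → ℤ) ⧸ M := Submodule.Quotient.mk (Pi.single i 1)
  have hmem : ∀ w : ℤ, Pi.single i w ∈ M ↔ w • g = 0 := fun w => by
    rw [← Submodule.Quotient.mk_smul, Submodule.Quotient.mk_eq_zero, ← Pi.single_smul,
      smul_eq_mul, mul_one]
  refine ⟨addOrderOf g, ?_, fun w => (hmem w).trans addOrderOf_dvd_iff_zsmul_eq_zero.symm⟩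
  have hpos : 0 < addOrderOf g :=
    (isOfFinAddOrder_iff_zsmul_eq_zero.mpr ⟨d, hd, (hmem d).mp hdM⟩).addOrderOf_pos
  have hndvd : ¬ (addOrderOf g : ℤ) ∣ 2 :=
    fun h => h2 ((hmem 2).mpr (addOrderOf_dvd_iff_zsmul_eq_zero.mp h))
  by_contra! hlt
  interval_cases addOrderOf g <;> norm_num at hndvd

theorem natCast_half_div_mem_Icc {q : ℕ} (hq : 2 ≤ q) :
    ((q / 2 : ℕ) : ℝ) / q ∈ Set.Icc (1 / 3) (2 / 3) := by
  have hq' : (0 : ℝ) < q := by positivity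
  have h₁ : (q : ℝ) ≤ 3 * (q / 2 : ℕ) := by exact_mod_cast (by omega : q ≤ 3 * (q / 2))
  have h₂ : ((q / 2 : ℕ) : ℝ) * 3 ≤ 2 * q := by exact_mod_cast (by omega : q / 2 * 3 ≤ 2 * q)
  constructor
  · rw [le_div_iff₀ hq']; linarith
  · rw [div_le_iff₀ hq']; linarith

theorem third_le_abs_add_intCast {r : ℝ} (hr : r ∈ Set.Icc (1 / 3) (2 / 3)) (u : ℤ) :
    1 / 3 ≤ |r + u| := by
  rcases le_or_gt 0 u with hu | hu
  · have : (0 : ℝ) ≤ u := by exact_mod_cast hu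
    exact le_abs.mpr (Or.inl (by linarith [hr.1]))
  · have : (u : ℝ) ≤ -1 := by exact_mod_cast Int.le_sub_one_of_lt hu
    exact le_abs.mpr (Or.inr (by linarith [hr.2]))

theorem one_le_abs_mul_add_of_dvd {e : ℕ} (he : 3 ≤ e) {r : ℝ} (hr : r ∈ Set.Icc (1 / 3) (2 / 3))
    {w : ℤ} (hw : (e : ℤ) ∣ w) : 1 ≤ |e * r + w| := by
  obtain ⟨u, rfl⟩ := hw
  have he' : (3 : ℝ) ≤ e := by exact_mod_cast he
  calc (1 : ℝ) ≤ e * (1 / 3) := by linarith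
    _ ≤ e * |r + u| := by gcongr; exact third_le_abs_add_intCast hr u
    _ = |e * r + ((e * u : ℤ) : ℝ)| := by
        rw [Int.cast_mul, Int.cast_natCast, ← mul_add, abs_mul, Nat.abs_cast]

theorem eq_single_of_forall_abs_single_add_lt_one {ι : Type*} [DecidableEq ι] {i : ι} {c : ℝ}
    {y : ι → ℤ} (h : ∀ k, |(Pi.single i c : ι → ℝ) k + y k| < 1) : y = Pi.single i (y i) := by
  ext k
  by_cases hk : k = i
  · subst hk; rw [Pi.single_eq_same]
  · have := h k
    rw [Pi.single_eq_of_ne hk, zero_add, ← Int.cast_abs, ← Int.cast_one, Int.cast_lt,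
      Int.abs_lt_one_iff] at this
    simp [this, hk]

theorem exists_forall_one_le_abs_mulVec {ι : Type*} [Fintype ι] [DecidableEq ι]
    {A : Matrix ι ι ℤ} {i : ι} {e : ℕ} (he : 3 ≤ e)
    (hA : ∀ w : ℤ, Pi.single i w ∈ LinearMap.range A.mulVecLin ↔ (e : ℤ) ∣ w)
    {q : ℕ} (hq : 2 ≤ q) :
    ∃ a : ι → ℝ, (∀ j, ∃ k : ℤ, a j = k / q) ∧
      ∀ x : ι → ℤ, ∃ k, 1 ≤ |(A.map (Int.cast : ℤ → ℝ) *ᵥ (a + fun j => (x j : ℝ))) k| := by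
  obtain ⟨xe, hxe⟩ := (hA e).mpr dvd_rfl
  set r : ℝ := ((q / 2 : ℕ) : ℝ) / q
  have hr := natCast_half_div_mem_Icc hq
  refine ⟨fun j => r * xe j,
    fun j => ⟨(q / 2 : ℕ) * xe j, by rw [Int.cast_mul, Int.cast_natCast, mul_div_right_comm]⟩,
    fun x => ?_⟩
  have hcast : ∀ y : ι → ℤ,
      A.map (Int.cast : ℤ → ℝ) *ᵥ (fun j => (y j : ℝ)) = fun k => ((A *ᵥ y) k : ℝ) :=
    fun y => funext fun k => (RingHom.map_mulVec (Int.castRingHom ℝ) A y k).symm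
  have hsplit : A.map (Int.cast : ℤ → ℝ) *ᵥ ((fun j => r * xe j) + fun j => (x j : ℝ))
      = Pi.single i (e * r) + fun k => ((A *ᵥ x) k : ℝ) := by
    rw [mulVec_add, show (fun j => r * xe j) = r • fun j => (xe j : ℝ) from rfl, mulVec_smul,
      hcast, hcast, show A *ᵥ xe = Pi.single i (e : ℤ) from hxe]
    ext k
    by_cases hk : k = i <;> simp [hk, mul_comm]
  by_contra! hlt
  rw [hsplit] at hlt
  have hy := eq_single_of_forall_abs_single_add_lt_one hlt
  have hdvd : (e : ℤ) ∣ (A *ᵥ x) i := (hA _).mp ⟨x, hy⟩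
  have := hlt i
  rw [Pi.add_apply, Pi.single_eq_same] at this
  exact (one_le_abs_mul_add_of_dvd he hr hdvd).not_gt this

theorem stmt14_general (n m : ℕ) (v : Fin m → Fin n → ℤ)
    (s : Fin n → Fin m)
    (hindep : LinearIndependent ℝ (fun k => fun i => (v (s k) i : ℝ)))
    (hnot2t : ∃ x : Fin n → ℤ,
      (2 : ℤ) • x ∉ Submodule.span ℤ (Set.range (v ∘ s))) :
    ∀ q : ℕ, 2 ≤ q →
      ∃ a : Fin n → ℝ, (∀ i, ∃ k : ℤ, a i = (k : ℝ) / q) ∧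
        ∀ x : Fin n → ℤ, ∃ j, 1 ≤ |∑ i, (a i + (x i : ℝ)) * (v j i : ℝ)| := by
  intro q hq
  set A : Matrix (Fin n) (Fin n) ℤ := of (v ∘ s)
  have hdet : A.det ≠ 0 := det_ne_zero_of_linearIndependent_row_map (K := ℝ) hindep
  obtain ⟨i, hi⟩ : ∃ i, Pi.single i 2 ∉ LinearMap.range A.mulVecLin := by
    by_contra! h
    obtain ⟨z, hz⟩ := hnot2t
    exact hz (smul_mem_span_row_of_forall_single_mem_range hdet h z)
  obtain ⟨e, he, hA⟩ := exists_three_le_forall_single_mem_iff _ i hdet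
    (single_det_mem_range_mulVecLin A i) hi
  obtain ⟨a, ha, hfar⟩ := exists_forall_one_le_abs_mulVec he hA hq
  refine ⟨a, ha, fun x => ?_⟩
  obtain ⟨k, hk⟩ := hfar x
  exact ⟨s k, by simpa [mulVec, dotProduct, mul_comm, A] using hk⟩

/-- Theorem 1.4: If a spanning configuration `v 1, ..., v m ∈ ℤⁿ` is
not 2-regular — some maximal (size-`n`) linearly independent subset spans a sublattice
whose quotient is not 2-torsion — then for every `q ≥ 2` some class of `(1/q)ℤⁿ/ℤⁿ`
has no representative in the open polytope `{u : |⟨u, v j⟩| < 1 ∀ j}`. -/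
theorem stmt14 (n m : ℕ) (v : Fin m → Fin n → ℤ)
    (hspan : Submodule.span ℝ (Set.range fun j => fun i => (v j i : ℝ)) = ⊤)
    (s : Fin n → Fin m)
    (hindep : LinearIndependent ℝ (fun k => fun i => (v (s k) i : ℝ)))
    (hnot2t : ∃ x : Fin n → ℤ,
      (2 : ℤ) • x ∉ Submodule.span ℤ (Set.range (v ∘ s))) :
    ∀ q : ℕ, 2 ≤ q →
      ∃ a : Fin n → ℝ, (∀ i, ∃ k : ℤ, a i = (k : ℝ) / q) ∧
        ∀ x : Fin n → ℤ, ∃ j, 1 ≤ |∑ i, (a i + (x i : ℝ)) * (v j i : ℝ)| :=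
  stmt14_general n m v s hindep hnot2t
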